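/- arXiv:1210.2442 — 3 statements merged into one kernel-verified Lean document; each statement's English description precedes it below -/
import Mathlib

section
/- Let P be a CPOS polygon such that each pair of consecutive great diagonals d_i, d_{i+1} meets in a unique point D(i+1/2). Then: (a) all the points D(i+1/2), 1 ≤ i ≤ 2n, coincide (the central symmetry set reduces to a point) if and only if P is symmetric with respect to some point O; (b) all the midpoints M_i := (P_i + P_{i+n})/2, 1 ≤ i ≤ n, coincide (the area evolute reduces to a point) if and only if P is symmetric with respect to some point O. -/
open scoped BigOperators Classical

/-- `det2 v w` is the determinant of the 2×2 matrix with columns `v, w ∈ ℝ²`. -/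
noncomputable def det2 (v w : ℝ × ℝ) : ℝ := v.1 * w.2 - v.2 * w.1

/-- A convex polygon with parallel opposite sides (CPOS polygon): vertices `P i`, `i : ℤ`,
periodic with period `2n`; the side vectors `e(i+1/2) = P(i+1) - P i` satisfy
`e(i+n+1/2) ∥ e(i+1/2)`, no two adjacent sides are parallel, and the polygon is
positively oriented: `[e(i+1/2), e(j+1/2)] > 0` for `1 ≤ i < j ≤ n`. -/
structure CPOS (n : ℕ) : Type where
  P : ℤ → ℝ × ℝ
  hn : 2 ≤ n
  periodic : ∀ i : ℤ, P (i + 2 * (n : ℤ)) = P i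
  parallel : ∀ i : ℤ, ∃ t : ℝ, P (i + (n : ℤ) + 1) - P (i + (n : ℤ)) = t • (P (i + 1) - P i)
  adj_not_parallel : ∀ i : ℤ, det2 (P (i + 1) - P i) (P (i + 2) - P (i + 1)) ≠ 0
  oriented : ∀ i j : ℤ, 1 ≤ i → i < j → j ≤ (n : ℤ) →
    0 < det2 (P (i + 1) - P i) (P (j + 1) - P j)

/-- `onDiag P n i x` : the point `x` lies on the great diagonal `d_i`,
the line through `P i` and `P (i+n)`. -/
def onDiag (P : ℤ → ℝ × ℝ) (n : ℕ) (i : ℤ) (x : ℝ × ℝ) : Prop :=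
  ∃ t : ℝ, x = P i + t • (P (i + (n : ℤ)) - P i)

/-! If all the points `D(i+1/2)` equal `X`, then `X` lies on every great diagonal and
consecutive great diagonals are not parallel. Write `P_{i+n} - X = λ_i (P_i - X)` and
`e(i+n+1/2) = s_i e(i+1/2)`. Comparing these relations at `i` and `i+1` forces
`λ_i = s_i = λ_{i+1}` whenever the vectors involved are nonzero, so `s_i = s_{i+1}` whenever
`P_{i+1} ≠ X`.

If `X` is never a vertex, `λ` is a constant `c` with `c² = 1` (by `2n`-periodicity) and `c ≠ 1`,
so `c = -1`: the polygon is symmetric about `X`. If `X = P_z` is a vertex, then also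
`P_{z+n} = X`, and along the sides from `P_z` to the next vertex equal to `X` the factor `s` is
constant. These sides sum to zero; folding those beyond index `n` back onto the first sides (they
are scaled by `1/s`) contradicts the positive orientation of `e(1+1/2), …, e(n+1/2)`, tested
against `e(1+1/2)` and the last folded side. Part (b) is immediate, and the converse of (a)
follows from the uniqueness of `D(i+1/2)`, the centre of symmetry lying on every great diagonal. -/

open Finset

lemma det2_smul_left (a : ℝ) (v w : ℝ × ℝ) : det2 (a • v) w = a * det2 v w := by
  simp only [det2, Prod.smul_fst, Prod.smul_snd, smul_eq_mul]; ring

lemma det2_smul_right (a : ℝ) (v w : ℝ × ℝ) : det2 v (a • w) = a * det2 v w := by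
  simp only [det2, Prod.smul_fst, Prod.smul_snd, smul_eq_mul]; ring

lemma det2_add_right (u v w : ℝ × ℝ) : det2 u (v + w) = det2 u v + det2 u w := by
  simp only [det2, Prod.fst_add, Prod.snd_add]; ring

lemma det2_zero_left (w : ℝ × ℝ) : det2 0 w = 0 := by simp [det2]

lemma det2_zero_right (v : ℝ × ℝ) : det2 v 0 = 0 := by simp [det2]

lemma det2_self (v : ℝ × ℝ) : det2 v v = 0 := by unfold det2; ring

lemma det2_swap (v w : ℝ × ℝ) : det2 v w = -det2 w v := by unfold det2; ring

lemma det2_sum_right {ι : Type*} (v : ℝ × ℝ) (s : Finset ι) (f : ι → ℝ × ℝ) :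
    det2 v (∑ k ∈ s, f k) = ∑ k ∈ s, det2 v (f k) := by
  simp only [det2, Prod.fst_sum, Prod.snd_sum, mul_sum, sum_sub_distrib]

lemma eq_zero_of_smul_eq_smul_of_det2_ne_zero {v w : ℝ × ℝ} (h : det2 v w ≠ 0) {a b : ℝ}
    (hab : a • v = b • w) : a = 0 ∧ b = 0 := by
  have ha : a * det2 v w = 0 := by rw [← det2_smul_left, hab, det2_smul_left, det2_self, mul_zero]
  have hb : b * det2 v w = 0 := by
    rw [← det2_smul_right, ← hab, det2_smul_right, det2_self, mul_zero]
  exact ⟨(mul_eq_zero.1 ha).resolve_right h, (mul_eq_zero.1 hb).resolve_right h⟩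

lemma exists_eq_smul_of_det2_eq_zero {v w : ℝ × ℝ} (h : det2 v w = 0) (hw : w ≠ 0) :
    ∃ k : ℝ, v = k • w := by
  unfold det2 at h
  have hw' : w.1 ≠ 0 ∨ w.2 ≠ 0 := by
    contrapose! hw
    exact Prod.ext hw.1 hw.2
  rcases hw' with h₁ | h₂
  · refine ⟨v.1 / w.1, Prod.ext ?_ ?_⟩ <;>
      simp only [Prod.smul_fst, Prod.smul_snd, smul_eq_mul]
    · field_simp
    · field_simp
      linear_combination -h
  · refine ⟨v.2 / w.2, Prod.ext ?_ ?_⟩ <;>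
      simp only [Prod.smul_fst, Prod.smul_snd, smul_eq_mul]
    · field_simp
      linear_combination h
    · field_simp

lemma sum_Ico_sub_int {M : Type*} [AddCommGroup M] (f : ℤ → M) {a b : ℤ} (hab : a ≤ b) :
    ∑ k ∈ Ico a b, (f (k + 1) - f k) = f b - f a := by
  induction b, hab using Int.leInduction with
  | base => simp
  | succ b hab ih =>
    rw [← insert_Ico_right_eq_Ico_add_one hab, sum_insert right_notMem_Ico, ih]
    abel

def IsPositivelyOriented (e : ℤ → ℝ × ℝ) (n : ℤ) : Prop :=
  ∀ i j, 1 ≤ i → i < j → j ≤ n → 0 < det2 (e i) (e j)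

section Oriented

variable {e : ℤ → ℝ × ℝ} {n : ℤ}

lemma sum_det2_pos (he : IsPositivelyOriented e n)
    {a z m : ℤ} (ha : 1 ≤ a) (haz : a < z) (hzm : z < m) (hm : m ≤ n + 1) :
    0 < ∑ k ∈ Ico z m, det2 (e a) (e k) :=
  sum_pos (fun k hk ↦ he a k ha (by grind) (by grind)) (nonempty_Ico.2 hzm)

lemma sum_Ico_ne_zero_of_oriented (he : IsPositivelyOriented e n)
    {z m : ℤ} (hz : 1 ≤ z) (hzm : z + 1 < m) (hm : m ≤ n + 1) :
    ∑ k ∈ Ico z m, e k ≠ 0 := by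
  intro h
  have hdet : ∑ k ∈ Ico z m, det2 (e z) (e k) = 0 := by
    rw [← det2_sum_right, h, det2_zero_right]
  rw [← insert_Ico_add_one_left_eq_Ico (by omega), sum_insert (by simp), det2_self,
    zero_add] at hdet
  exact (sum_det2_pos he hz (lt_add_one z) hzm hm).ne' hdet

lemma sum_Ico_add_smul_sum_Ico_ne_zero
    (he : IsPositivelyOriented e n)
    {b z m : ℤ} (hb : 1 < b) (hbz : b ≤ z) (hzm : z < m) (hm : m ≤ n + 1) (c : ℝ) :
    ∑ k ∈ Ico z m, e k + c • ∑ k ∈ Ico 1 b, e k ≠ 0 := by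
  intro h
  have hdet (v : ℝ × ℝ) :
      ∑ k ∈ Ico z m, det2 v (e k) + c * ∑ k ∈ Ico 1 b, det2 v (e k) = 0 := by
    rw [← det2_sum_right, ← det2_sum_right, ← det2_smul_right, ← det2_add_right, h,
      det2_zero_right]
  have hA₁ := sum_det2_pos he le_rfl (by omega) hzm hm
  have hA₂ := sum_det2_pos he (a := b - 1) (by omega) (by omega) hzm hm
  have hB₁ : 0 ≤ ∑ k ∈ Ico 1 b, det2 (e 1) (e k) := sum_nonneg fun k hk ↦ by
    rcases (mem_Ico.1 hk).1.eq_or_lt with rfl | hk1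
    · rw [det2_self]
    · exact (he 1 k le_rfl hk1 (by grind)).le
  have hB₂ : ∑ k ∈ Ico 1 b, det2 (e (b - 1)) (e k) ≤ 0 := sum_nonpos fun k hk ↦ by
    rcases (Int.le_sub_one_of_lt (mem_Ico.1 hk).2).eq_or_lt with rfl | hkb
    · rw [det2_self]
    · rw [det2_swap, neg_nonpos]
      exact (he k (b - 1) (mem_Ico.1 hk).1 hkb (by omega)).le
  have h₁ := hdet (e 1)
  have h₂ := hdet (e (b - 1))
  have hc : c < 0 := by
    by_contra! hc
    nlinarith [mul_nonneg hc hB₁]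
  nlinarith [mul_nonneg_of_nonpos_of_nonpos hc.le hB₂]

end Oriented

section Diagonal

variable {P : ℤ → ℝ × ℝ} {n : ℕ} {i : ℤ} {X : ℝ × ℝ}

lemma onDiag.add_smul (h : onDiag P n i X) (r : ℝ) : onDiag P n i (X + r • (P i - X)) := by
  obtain ⟨t, rfl⟩ := h
  exact ⟨t - r * t, by module⟩

lemma onDiag.exists_smul (h : onDiag P n i X) (hX : P i ≠ X) :
    ∃ r : ℝ, P (i + n) - X = r • (P i - X) := by
  obtain ⟨t, rfl⟩ := h
  have ht : t ≠ 0 := by rintro rfl; simp at hX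
  have hcoef : (t - 1) / t * t = t - 1 := div_mul_cancel₀ _ ht
  exact ⟨(t - 1) / t, by linear_combination (norm := module) hcoef • (P (i + n) - P i)⟩

lemma onDiag.endpoints_ne (h : onDiag P n i X) (hX : P i ≠ X) : P (i + n) ≠ P i := by
  obtain ⟨t, rfl⟩ := h
  intro h
  simp [h] at hX

lemma onDiag_of_sub_eq_sub (h : P (i + n) - X = X - P i) : onDiag P n i X :=
  ⟨1 / 2, by linear_combination (norm := module) (-(1 / 2 : ℝ)) • h⟩

end Diagonal

/-- All the points `D(i+1/2)` equal `X`. -/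
structure IsDiagonalCenter (P : ℤ → ℝ × ℝ) (n : ℕ) (X : ℝ × ℝ) : Prop where
  mem_diag : ∀ i, onDiag P n i X
  unique : ∀ i x, onDiag P n i x → onDiag P n (i + 1) x → x = X

lemma IsDiagonalCenter.det2_ne_zero {P : ℤ → ℝ × ℝ} {n : ℕ} {X : ℝ × ℝ}
    (hX : IsDiagonalCenter P n X) {i : ℤ} (h : P i ≠ X) (h' : P (i + 1) ≠ X) :
    det2 (P i - X) (P (i + 1) - X) ≠ 0 := by
  intro hdet
  obtain ⟨k, hk⟩ := exists_eq_smul_of_det2_eq_zero hdet (sub_ne_zero.2 h')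
  have hk0 : k ≠ 0 := by rintro rfl; simp [sub_eq_zero, h] at hk
  -- otherwise `X + (P (i + 1) - X)` would be a second common point of `d_i` and `d_{i+1}`
  have hmem : onDiag P n i (X + k⁻¹ • (P i - X)) := (hX.mem_diag i).add_smul _
  have hmem' : onDiag P n (i + 1) (X + (1 : ℝ) • (P (i + 1) - X)) :=
    (hX.mem_diag (i + 1)).add_smul _
  rw [hk, smul_smul, inv_mul_cancel₀ hk0] at hmem
  have := hX.unique i _ hmem hmem'
  simp [h'] at this

namespace CPOS

variable {n : ℕ} (C : CPOS n)

lemma side_ne_zero (i : ℤ) : C.P (i + 1) - C.P i ≠ 0 := fun h ↦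
  C.adj_not_parallel i (by rw [h, det2_zero_left])

lemma P_add_n_add_n (i : ℤ) : C.P (i + n + n) = C.P i := by
  rw [add_assoc, ← two_mul, C.periodic]

noncomputable def ratio (i : ℤ) : ℝ := (C.parallel i).choose

lemma side_add_n (i : ℤ) :
    C.P (i + n + 1) - C.P (i + n) = C.ratio i • (C.P (i + 1) - C.P i) :=
  (C.parallel i).choose_spec

lemma ratio_add_n_mul_ratio (i : ℤ) : C.ratio (i + n) * C.ratio i = 1 := by
  have h := C.side_add_n (i + n)
  rw [show i + n + n + 1 = i + 1 + n + n by ring, C.P_add_n_add_n, C.P_add_n_add_n, C.side_add_n,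
    smul_smul] at h
  exact smul_left_injective ℝ (C.side_ne_zero i) (by simpa using h.symm)

lemma sum_sides_add_n {b : ℤ} {c : ℝ} (hc : ∀ k ∈ Ico 1 b, C.ratio (k + n) = c) :
    ∑ k ∈ Ico (1 + (n : ℤ)) (b + n), (C.P (k + 1) - C.P k)
      = c⁻¹ • ∑ k ∈ Ico 1 b, (C.P (k + 1) - C.P k) := by
  rw [← sum_Ico_add', smul_sum]
  refine sum_congr rfl fun k hk ↦ ?_
  rw [C.side_add_n, ← hc k hk, ← eq_inv_of_mul_eq_one_right (C.ratio_add_n_mul_ratio k)]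

variable {C} {X : ℝ × ℝ}

lemma P_add_n_eq_of_eq (hX : IsDiagonalCenter C.P n X) {z : ℤ} (hz : C.P z = X) :
    C.P (z + n) = X := by
  obtain ⟨w, rfl⟩ : ∃ w, z = w + 1 := ⟨z - 1, by ring⟩
  have hnext : C.P (w + 1 + 1) ≠ X := fun h ↦ C.side_ne_zero (w + 1) (by rw [h, hz, sub_self])
  have hprev : C.P w ≠ X := fun h ↦ C.side_ne_zero w (by rw [h, hz, sub_self])
  obtain ⟨r, hr⟩ := (hX.mem_diag (w + 1 + 1)).exists_smul hnext
  obtain ⟨r', hr'⟩ := (hX.mem_diag w).exists_smul hprev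
  have h₁ := C.side_add_n (w + 1)
  have h₀ := C.side_add_n w
  rw [show w + 1 + 1 + n = w + 1 + n + 1 by ring] at hr
  rw [show w + n + 1 = w + 1 + n by ring] at h₀
  -- `P (z + n) - X` is a multiple of both `e(z-1/2)` and `e(z+1/2)`
  have hA : C.P (w + 1 + n) - X = (C.ratio w - r') • (C.P (w + 1) - C.P w) := by
    linear_combination (norm := module) h₀ + hr' + r' • hz
  have hA' : C.P (w + 1 + n) - X = (r - C.ratio (w + 1)) • (C.P (w + 1 + 1) - C.P (w + 1)) := by
    linear_combination (norm := module) hr - h₁ + r • hz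
  have hdet : det2 (C.P (w + 1) - C.P w) (C.P (w + 1 + 1) - C.P (w + 1)) ≠ 0 := by
    simpa [add_assoc, one_add_one_eq_two] using C.adj_not_parallel w
  obtain ⟨h0, -⟩ := eq_zero_of_smul_eq_smul_of_det2_ne_zero hdet (hA.symm.trans hA')
  rw [← sub_eq_zero, hA, h0, zero_smul]

lemma exists_smul_sub_center (hX : IsDiagonalCenter C.P n X) (i : ℤ) :
    ∃ r : ℝ, C.P (i + n) - X = r • (C.P i - X) := by
  by_cases h : C.P i = X
  · exact ⟨0, by rw [P_add_n_eq_of_eq hX h, sub_self, zero_smul]⟩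
  · exact (hX.mem_diag i).exists_smul h

lemma ratio_eq_of_smul_sub_center (hX : IsDiagonalCenter C.P n X) {i : ℤ} {r₀ r₁ : ℝ}
    (h₀ : C.P (i + n) - X = r₀ • (C.P i - X))
    (h₁ : C.P (i + 1 + n) - X = r₁ • (C.P (i + 1) - X)) :
    (C.P i ≠ X → r₀ = C.ratio i) ∧ (C.P (i + 1) ≠ X → r₁ = C.ratio i) := by
  have hs := C.side_add_n i
  rw [show i + n + 1 = i + 1 + n by ring] at hs
  have key : (r₀ - C.ratio i) • (C.P i - X) = (r₁ - C.ratio i) • (C.P (i + 1) - X) := by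
    linear_combination (norm := module) h₁ - h₀ - hs
  refine ⟨fun hi ↦ ?_, fun hi' ↦ ?_⟩
  · by_cases hi' : C.P (i + 1) = X
    · rw [hi', sub_self, smul_zero, smul_eq_zero, sub_eq_zero] at key
      exact key.resolve_right (sub_ne_zero.2 hi)
    · exact sub_eq_zero.1 (eq_zero_of_smul_eq_smul_of_det2_ne_zero (hX.det2_ne_zero hi hi') key).1
  · by_cases hi : C.P i = X
    · rw [hi, sub_self, smul_zero, eq_comm, smul_eq_zero, sub_eq_zero] at key
      exact key.resolve_right (sub_ne_zero.2 hi')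
    · exact sub_eq_zero.1 (eq_zero_of_smul_eq_smul_of_det2_ne_zero (hX.det2_ne_zero hi hi') key).2

lemma ratio_succ_eq (hX : IsDiagonalCenter C.P n X) {i : ℤ} (h : C.P (i + 1) ≠ X) :
    C.ratio (i + 1) = C.ratio i := by
  obtain ⟨r₀, h₀⟩ := exists_smul_sub_center hX i
  obtain ⟨r₁, h₁⟩ := exists_smul_sub_center hX (i + 1)
  obtain ⟨r₂, h₂⟩ := exists_smul_sub_center hX (i + 1 + 1)
  rw [← (ratio_eq_of_smul_sub_center hX h₁ h₂).1 h,
    (ratio_eq_of_smul_sub_center hX h₀ h₁).2 h]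

lemma ratio_eq_of_forall_ne (hX : IsDiagonalCenter C.P n X) {z w : ℤ}
    (hne : ∀ k, z < k → k < w → C.P k ≠ X) : ∀ k ∈ Ico z w, C.ratio k = C.ratio z := by
  intro k hk
  obtain ⟨hzk, hkw⟩ := mem_Ico.1 hk
  clear hk
  induction k, hzk using Int.leInduction with
  | base => rfl
  | succ k hzk ih => rw [ratio_succ_eq hX (hne _ (by omega) hkw), ih (by omega)]

lemma P_ne_center_of_one_le_of_le (hX : IsDiagonalCenter C.P n X) {z : ℤ} (hz : 1 ≤ z)
    (hzn : z ≤ n) : C.P z ≠ X := by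
  intro hzX
  obtain ⟨w, ⟨hzw, hwX⟩, hmin⟩ :=
    Int.exists_least_of_bdd (P := fun w ↦ z < w ∧ C.P w = X)
    ⟨z, fun _ h ↦ h.1.le⟩ ⟨z + n, by omega, P_add_n_eq_of_eq hX hzX⟩
  have hwn : w ≤ z + n := hmin _ ⟨by omega, P_add_n_eq_of_eq hX hzX⟩
  have hw2 : z + 1 < w := by
    refine lt_of_le_of_ne hzw fun h ↦ C.side_ne_zero z ?_
    rw [h, hwX, hzX, sub_self]
  have hratio := ratio_eq_of_forall_ne hX fun k hzk hkw hk ↦ (hmin k ⟨hzk, hk⟩).not_gt hkw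
  have hsum : ∑ k ∈ Ico z w, (C.P (k + 1) - C.P k) = 0 := by
    rw [sum_Ico_sub_int C.P hzw.le, hwX, hzX, sub_self]
  rcases le_or_gt w (n + 1) with hw | hw
  · exact sum_Ico_ne_zero_of_oriented C.oriented hz hw2 hw hsum
  · refine sum_Ico_add_smul_sum_Ico_ne_zero C.oriented (b := w - n) (z := z) (m := n + 1)
      (by omega) (by omega) (by omega) le_rfl (C.ratio z)⁻¹ ?_
    rw [← C.sum_sides_add_n fun k hk ↦ hratio _ (by grind), ← hsum,
      ← Ico_union_Ico_eq_Ico (a := z) (b := n + 1) (by omega) hw.le,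
      sum_union (Ico_disjoint_Ico_consecutive _ _ _), add_comm 1, sub_add_cancel]

lemma P_ne_center (hX : IsDiagonalCenter C.P n X) (i : ℤ) : C.P i ≠ X := by
  have hper : Function.Periodic (fun i ↦ C.P i = X) n := fun i ↦
    propext ⟨fun h ↦ (C.P_add_n_add_n i ▸ P_add_n_eq_of_eq hX h : C.P i = X),
      P_add_n_eq_of_eq hX⟩
  obtain ⟨z, hz, hiz⟩ := hper.exists_mem_Ico (by have := C.hn; omega) i 1
  exact fun h ↦ P_ne_center_of_one_le_of_le hX hz.1 (by grind) (hiz.mp h)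

theorem sub_center_eq_center_sub (hX : IsDiagonalCenter C.P n X) (i : ℤ) :
    C.P (i + n) - X = X - C.P i := by
  have hne := P_ne_center hX
  have hper : Function.Periodic C.ratio 1 := fun i ↦ ratio_succ_eq hX (hne _)
  have hconst (i : ℤ) : C.ratio i = C.ratio 0 := by simpa using hper.int_mul_eq i
  have hsmul (i : ℤ) : C.P (i + n) - X = C.ratio 0 • (C.P i - X) := by
    obtain ⟨r₀, h₀⟩ := exists_smul_sub_center hX i
    obtain ⟨r₁, h₁⟩ := exists_smul_sub_center hX (i + 1)
    rwa [← hconst i, ← (ratio_eq_of_smul_sub_center hX h₀ h₁).1 (hne i)]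
  have hsq : C.ratio 0 * C.ratio 0 = 1 := by simpa [hconst] using C.ratio_add_n_mul_ratio 0
  have hne1 : C.ratio 0 ≠ 1 := fun h1 ↦
    (hX.mem_diag 0).endpoints_ne (hne 0) (by simpa [h1] using hsmul 0)
  rw [hsmul i, (mul_self_eq_one_iff.1 hsq).resolve_left hne1, neg_one_smul, neg_sub]

end CPOS

/-- For a CPOS polygon whose consecutive great diagonals `d_i, d_{i+1}`
meet in a unique point `D(i+1/2)`:
(a) all the points `D(i+1/2)` coincide iff the polygon is symmetric w.r.t. some point `O`;
(b) all the midpoints `M_i = (P_i + P_{i+n})/2` coincide iff the polygon is symmetric. -/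
theorem statement0 {n : ℕ} (C : CPOS n) (D : ℤ → ℝ × ℝ)
    (hD : ∀ i : ℤ, onDiag C.P n i (D i) ∧ onDiag C.P n (i + 1) (D i))
    (huniq : ∀ i : ℤ, ∀ x : ℝ × ℝ, onDiag C.P n i x ∧ onDiag C.P n (i + 1) x → x = D i) :
    ((∀ i j : ℤ, D i = D j) ↔
      ∃ O : ℝ × ℝ, ∀ i : ℤ, C.P (i + (n : ℤ)) - O = O - C.P i) ∧
    ((∀ i j : ℤ, (1 / 2 : ℝ) • (C.P i + C.P (i + (n : ℤ)))
        = (1 / 2 : ℝ) • (C.P j + C.P (j + (n : ℤ)))) ↔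
      ∃ O : ℝ × ℝ, ∀ i : ℤ, C.P (i + (n : ℤ)) - O = O - C.P i) := by
  have hcenter (hDconst : ∀ i j : ℤ, D i = D j) : IsDiagonalCenter C.P n (D 0) :=
    ⟨fun i ↦ hDconst i 0 ▸ (hD i).1, fun i x h h' ↦ hDconst i 0 ▸ huniq i x ⟨h, h'⟩⟩
  have hD_eq_center {O : ℝ × ℝ} (hO : ∀ i : ℤ, C.P (i + n) - O = O - C.P i) (i : ℤ) :
      D i = O :=
    (huniq i O ⟨onDiag_of_sub_eq_sub (hO i), onDiag_of_sub_eq_sub (hO (i + 1))⟩).symm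
  refine ⟨⟨fun hDconst ↦ ⟨D 0, C.sub_center_eq_center_sub (hcenter hDconst)⟩, ?_⟩,
    ⟨fun hM ↦ ⟨(1 / 2 : ℝ) • (C.P 0 + C.P (0 + n)), fun i ↦ ?_⟩, ?_⟩⟩
  · rintro ⟨O, hO⟩ i j
    rw [hD_eq_center hO i, hD_eq_center hO j]
  · linear_combination (norm := module) (2 : ℝ) • hM i 0
  · rintro ⟨O, hO⟩ i j
    linear_combination (norm := module) (1 / 2 : ℝ) • hO i - (1 / 2 : ℝ) • hO j
end

section
/- Let P be a CPOS polygon that is equal-area, i.e. [P_{i+1} − P_i, P_i − P_{i−1}] takes the same (nonzero) value for all i modulo 2n. Write its side vectors as e_i := P_{i+1} − P_i for 1 ≤ i ≤ n and e_{n+i} = −α_i e_i with α_i > 0 for 1 ≤ i ≤ n. Then α_1 = α_n and α_i α_{i+1} = 1 for 1 ≤ i ≤ n−1. Consequently: if α_i = 1 for some i, then α_j = 1 for all j and P is symmetric with respect to a point; if α_i ≠ 1 for some i, then n is odd and α_{i+1} = α_i^{−1} for 1 ≤ i ≤ n−1, so the α_i alternate between a value α ≠ 1 and α^{−1}. In particular,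 when n is even every equal-area CPOS polygon is symmetric. -/
/-!
Scaling two adjacent sides by `-a` and `-b` multiplies their determinant by `a b`, so comparing
the corner at `P (i + n + 1)` with the one at `P (i + 1)` gives `α i α (i + 1) = 1`. The corners at
`P (n + 1)` and `P 1` share the sides `e 1`, `e n` up to the factors `-α 1` and `-α n`, whence
`α 1 = α n`. Hence the `α i` alternate between `α 1` and `(α 1)⁻¹`; when `n` is even this forces
`(α 1)⁻¹ = α 1`, i.e. `α 1 = 1`. Once all `α i = 1`, opposite sides are opposite vectors, so
`P (i + n) + P i` is constant and its half is the centre of symmetry.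
-/

open scoped BigOperators Classical

theorem det2_neg_smul_left (a : ℝ) (v w : ℝ × ℝ) : det2 (-(a • v)) w = -(a * det2 v w) := by
  simp only [det2, Prod.fst_neg, Prod.snd_neg, Prod.smul_fst, Prod.smul_snd, smul_eq_mul]
  ring

theorem det2_neg_smul_right (a : ℝ) (v w : ℝ × ℝ) : det2 v (-(a • w)) = -(a * det2 v w) := by
  simp only [det2, Prod.fst_neg, Prod.snd_neg, Prod.smul_fst, Prod.smul_snd, smul_eq_mul]
  ring

theorem mul_eq_one_of_det2_neg_smul_eq {u v : ℝ × ℝ} {a b c : ℝ} (hc : c ≠ 0)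
    (huv : det2 u v = c) (h : det2 (-(a • u)) (-(b • v)) = c) : a * b = 1 := by
  rw [det2_neg_smul_left, det2_neg_smul_right, huv] at h
  exact mul_right_cancel₀ hc (by linear_combination h)

theorem eq_of_det2_neg_smul_eq {u v : ℝ × ℝ} {a b c : ℝ} (huv : det2 u v ≠ 0)
    (ha : det2 (-(a • u)) v = c) (hb : det2 u (-(b • v)) = c) : a = b := by
  rw [det2_neg_smul_left] at ha
  rw [det2_neg_smul_right] at hb
  exact mul_right_cancel₀ huv (by linear_combination hb - ha)

theorem eq_zpow_neg_one_pow_of_mul_succ_eq_one {G : Type*} [DivisionMonoid G] {a : ℤ → G}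
    {m N : ℤ} (h : ∀ i, m ≤ i → i < N → a i * a (i + 1) = 1) :
    ∀ k : ℕ, m + k ≤ N → a (m + k) = a m ^ (-1 : ℤ) ^ k
  | 0, _ => by simp
  | k + 1, hk => by
    have hstep := eq_inv_of_mul_eq_one_right (h (m + k) (by omega) (by push_cast at hk; omega))
    rw [Nat.cast_succ, ← add_assoc, hstep,
      eq_zpow_neg_one_pow_of_mul_succ_eq_one h k (by push_cast at hk; omega),
      pow_succ, mul_neg_one, zpow_neg]

theorem eq_one_iff_of_mul_succ_eq_one {G : Type*} [DivisionMonoid G] {a : ℤ → G} {m N : ℤ}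
    (h : ∀ i, m ≤ i → i < N → a i * a (i + 1) = 1) {j : ℤ} (hmj : m ≤ j) (hjN : j ≤ N) :
    a j = 1 ↔ a m = 1 := by
  obtain ⟨k, rfl⟩ : ∃ k : ℕ, j = m + k := ⟨(j - m).toNat, by omega⟩
  rw [eq_zpow_neg_one_pow_of_mul_succ_eq_one h k hjN]
  rcases neg_one_pow_eq_or ℤ k with hk | hk <;> simp [hk]

theorem eq_one_of_mul_succ_eq_one_of_odd {K : Type*} [Field K] [LinearOrder K]
    [IsStrictOrderedRing K] {a : ℤ → K} {m N : ℤ}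
    (h : ∀ i, m ≤ i → i < N → a i * a (i + 1) = 1) (hmN : m ≤ N) (hodd : Odd (N - m))
    (hends : a m = a N) (hpos : 0 < a m) : a m = 1 := by
  obtain ⟨k, hk⟩ : ∃ k : ℕ, N = m + k := ⟨(N - m).toNat, by omega⟩
  have hinv := eq_zpow_neg_one_pow_of_mul_succ_eq_one h k hk.ge
  rw [← hk, ← hends, (Int.odd_coe_nat k).1 (by simpa [hk] using hodd) |>.neg_one_pow,
    zpow_neg_one] at hinv
  have hsq : a m * a m = 1 := by
    nth_rw 2 [hinv]
    exact mul_inv_cancel₀ hpos.ne'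
  exact (mul_self_eq_one_iff.mp hsq).resolve_right (by linarith)

theorem Function.Periodic.eq_of_succ_eq {X : Type*} {f : ℤ → X} {n : ℤ} (hf : f.Periodic n)
    (hn : 0 < n) {m : ℤ} (hstep : ∀ i, m ≤ i → i < m + n → f (i + 1) = f i) (i : ℤ) :
    f i = f m := by
  have hwindow : ∀ k : ℕ, (k : ℤ) ≤ n → f (m + k) = f m := by
    intro k
    induction k with
    | zero => simp
    | succ k ih =>
      intro hk
      push_cast at hk ⊢
      rw [← add_assoc, hstep _ (by omega) (by omega), ih (by omega)]
  obtain ⟨r, hr⟩ : ∃ r : ℕ, (r : ℤ) = (i - m) % n :=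
    ⟨_, Int.toNat_of_nonneg (Int.emod_nonneg _ hn.ne')⟩
  calc f i = f (m + (i - m) % n) := by
        rw [Int.emod_def, ← hf.sub_int_mul_eq ((i - m) / n)]
        push_cast
        ring_nf
    _ = f m := by
        rw [← hr]
        exact hwindow r (by have := Int.emod_lt_of_pos (i - m) hn; omega)

def side {V : Type*} [Sub V] (P : ℤ → V) (i : ℤ) : V := P (i + 1) - P i

theorem side_add_of_periodic {V : Type*} [Sub V] {P : ℤ → V} {p : ℤ} (hP : P.Periodic p)
    (i : ℤ) : side P (i + p) = side P i := by
  simp only [side, add_right_comm i p 1, hP _]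

theorem exists_center_of_side_add_eq_neg {V : Type*} [AddCommGroup V] [Module ℝ V]
    {P : ℤ → V} {n : ℕ} (hn : 0 < n) (hP : P.Periodic (2 * n))
    (hside : ∀ i : ℤ, 1 ≤ i → i ≤ n → side P (i + n) = -side P i) :
    ∃ O : V, ∀ i : ℤ, P (i + n) - O = O - P i := by
  set S : ℤ → V := fun i => P (i + n) + P i
  have hS : S.Periodic n := fun i => by
    simp only [S]
    rw [add_assoc, ← two_mul, hP, add_comm]
  have hS_const := hS.eq_of_succ_eq (by exact_mod_cast hn) (m := 1) fun i h1 h2 => by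
    have h := hside i h1 (by omega)
    simp only [side, S] at h ⊢
    rw [add_right_comm]
    linear_combination (norm := module) h
  refine ⟨(2 : ℝ)⁻¹ • S 1, fun i => ?_⟩
  rw [sub_eq_sub_iff_add_eq_add, ← two_smul ℝ, smul_smul, mul_inv_cancel₀ two_ne_zero, one_smul]
  exact hS_const i

section EqualArea

variable {P : ℤ → ℝ × ℝ} {n : ℕ} {c : ℝ} {α : ℤ → ℝ}
  (hEA : ∀ i : ℤ, det2 (side P (i + 1)) (side P i) = c)
  (hα : ∀ i : ℤ, 1 ≤ i → i ≤ n → side P (i + n) = -(α i • side P i))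
include hEA hα

theorem mul_succ_eq_one_of_equal_area (hc : c ≠ 0) {i : ℤ} (h1 : 1 ≤ i) (h2 : i ≤ n - 1) :
    α i * α (i + 1) = 1 := by
  have h := hEA (i + n)
  rw [show i + n + 1 = i + 1 + n by ring, hα (i + 1) (by omega) (by omega), hα i h1 (by omega)] at h
  rw [mul_comm]
  exact mul_eq_one_of_det2_neg_smul_eq hc (hEA i) h

theorem eq_of_equal_area (hP : P.Periodic (2 * n)) (hn : 1 ≤ n)
    (h1n : det2 (side P 1) (side P n) ≠ 0) : α 1 = α n := by
  have hα1 := hα 1 le_rfl (by exact_mod_cast hn)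
  have hαn := hα n (by exact_mod_cast hn) le_rfl
  rw [← two_mul, ← zero_add (2 * (n : ℤ)), side_add_of_periodic hP] at hαn
  refine eq_of_det2_neg_smul_eq h1n (c := c) ?_ ?_
  · rw [← hα1, add_comm]
    exact hEA n
  · rw [← hαn]
    exact hEA 0

end EqualArea

/-- Let `P` be an equal-area CPOS polygon: `[e_{i+1}, e_i]` takes the same
nonzero value `c` for all `i`, where `e_i = P_{i+1} - P_i`. Write `e_{n+i} = -αᵢ eᵢ` with
`αᵢ > 0` for `1 ≤ i ≤ n`. Then `α₁ = αₙ` and `αᵢ αᵢ₊₁ = 1` for `1 ≤ i ≤ n-1`; if some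
`αᵢ = 1` then all `αⱼ = 1` and `P` is symmetric w.r.t. a point; if some `αᵢ ≠ 1` then `n`
is odd and `αᵢ₊₁ = αᵢ⁻¹` for `1 ≤ i ≤ n-1`; in particular for `n` even `P` is symmetric. -/
theorem statement6 {n : ℕ} (C : CPOS n) (c : ℝ) (hc : c ≠ 0)
    (hEA : ∀ i : ℤ, det2 (C.P (i + 1) - C.P i) (C.P i - C.P (i - 1)) = c)
    (α : ℤ → ℝ)
    (hα : ∀ i : ℤ, 1 ≤ i → i ≤ (n : ℤ) → 0 < α i ∧
      C.P (i + (n : ℤ) + 1) - C.P (i + (n : ℤ)) = -(α i • (C.P (i + 1) - C.P i))) :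
    α 1 = α (n : ℤ) ∧
    (∀ i : ℤ, 1 ≤ i → i ≤ (n : ℤ) - 1 → α i * α (i + 1) = 1) ∧
    ((∃ i : ℤ, 1 ≤ i ∧ i ≤ (n : ℤ) ∧ α i = 1) →
      (∀ j : ℤ, 1 ≤ j → j ≤ (n : ℤ) → α j = 1) ∧
        ∃ O : ℝ × ℝ, ∀ i : ℤ, C.P (i + (n : ℤ)) - O = O - C.P i) ∧
    ((∃ i : ℤ, 1 ≤ i ∧ i ≤ (n : ℤ) ∧ α i ≠ 1) →
      Odd n ∧ ∀ i : ℤ, 1 ≤ i → i ≤ (n : ℤ) - 1 → α (i + 1) = (α i)⁻¹) ∧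
    (Even n → ∃ O : ℝ × ℝ, ∀ i : ℤ, C.P (i + (n : ℤ)) - O = O - C.P i) := by
  have hn : (2 : ℤ) ≤ n := by exact_mod_cast C.hn
  have hP : C.P.Periodic (2 * n) := C.periodic
  have hEA' : ∀ i : ℤ, det2 (side C.P (i + 1)) (side C.P i) = c := fun i => by
    simpa [side] using hEA (i + 1)
  have hside : ∀ i : ℤ, 1 ≤ i → i ≤ n → side C.P (i + n) = -(α i • side C.P i) :=
    fun i h1 h2 => (hα i h1 h2).2
  have hprod : ∀ i : ℤ, 1 ≤ i → i ≤ n - 1 → α i * α (i + 1) = 1 :=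
    fun i h1 h2 => mul_succ_eq_one_of_equal_area hEA' hside hc h1 h2
  have hends : α 1 = α n := eq_of_equal_area hEA' hside hP (by omega)
    (C.oriented 1 n le_rfl (by omega) le_rfl).ne'
  have hchain : ∀ i : ℤ, 1 ≤ i → i < n → α i * α (i + 1) = 1 :=
    fun i h1 h2 => hprod i h1 (by omega)
  have hall : α 1 = 1 → ∀ j : ℤ, 1 ≤ j → j ≤ n → α j = 1 :=
    fun h j h1 h2 => (eq_one_iff_of_mul_succ_eq_one hchain h1 h2).2 h
  have heven : Even n → α 1 = 1 := fun he =>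
    eq_one_of_mul_succ_eq_one_of_odd hchain (by omega)
      (((Int.even_coe_nat n).2 he).sub_odd odd_one) hends (hα 1 le_rfl (by omega)).1
  have hsym : α 1 = 1 → ∃ O, ∀ i : ℤ, C.P (i + n) - O = O - C.P i := fun h =>
    exists_center_of_side_add_eq_neg (by omega) hP fun i h1 h2 => by
      rw [hside i h1 h2, hall h i h1 h2, one_smul]
  refine ⟨hends, hprod, ?_, ?_, fun he => hsym (heven he)⟩
  · rintro ⟨i, h1, h2, hi⟩
    have h := (eq_one_iff_of_mul_succ_eq_one hchain h1 h2).1 hi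
    exact ⟨hall h, hsym h⟩
  · rintro ⟨i, h1, h2, hi⟩
    exact ⟨Nat.not_even_iff_odd.mp fun he => hi (hall (heven he) i h1 h2),
      fun j h1 h2 => eq_inv_of_mul_eq_one_right (hprod j h1 h2)⟩
end

section
/- Let P be a CPOS polygon, let i be an index, and let α > 0 with α ≠ 1 be such that P_{i+1} − P_i = −α(P_{i+n+1} − P_{i+n}) and P_{i+n} − P_{i+n−1} = −α(P_i − P_{i−1}). Let M_i := (P_i + P_{i+n})/2, let D(i−1/2) be the intersection point of the great diagonals d_{i−1} and d_i, and let D(i+1/2) be the intersection point of d_i and d_{i+1}. Then, with λ := (α − 1)/(2(1 + α)), one has D(i+1/2) = M_i + λ(P_{i+n} − P_i) and D(i−1/2) = M_i − λ(P_{i+n} − P_i). In particular M_i is the midpoint of the segment D(i−1/2)D(i+1/2). -/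
open scoped BigOperators Classical

/-!
Both diagonals through `D(i+1/2)` pass through the centre of the homothety of ratio `-α` that
maps the side `P_{i+n}P_{i+n+1}` onto `P_iP_{i+1}`, i.e. the point dividing `P_iP_{i+n}` in the
ratio `α : 1`; symmetrically, `D(i-1/2)` divides it in the ratio `1 : α`. The two points are
therefore placed symmetrically about `M_i`, at offsets `±λ(P_{i+n} - P_i)`.
-/

section LineIntersection

variable {𝕜 E : Type*} [Field 𝕜] [AddCommGroup E] [Module 𝕜 E]

theorem add_smul_sub_eq_of_smul_sub_add_smul_sub_eq_zero {A B Q R : E} {a b : 𝕜}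
    (hab : a + b ≠ 0) (h : a • (Q - A) + b • (R - B) = 0) :
    Q + (b / (a + b)) • (R - Q) = A + (b / (a + b)) • (B - A) := by
  rw [← sub_eq_zero]
  calc Q + (b / (a + b)) • (R - Q) - (A + (b / (a + b)) • (B - A))
      = (a + b)⁻¹ • (a • (Q - A) + b • (R - B)) := by
        match_scalars <;> field_simp <;> ring
    _ = 0 := by rw [h, smul_zero]

theorem add_smul_sub_eq_midpoint_add_smul_sub [CharZero 𝕜] {A B : E} {a b : 𝕜} (hab : a + b ≠ 0) :
    A + (b / (a + b)) • (B - A) = (1 / 2 : 𝕜) • (A + B) + ((b - a) / (2 * (a + b))) • (B - A) := by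
  match_scalars <;> field_simp <;> ring

end LineIntersection

theorem statement7_general {n : ℕ} (C : CPOS n) (i : ℤ) (α : ℝ) (hα : 0 < α)
    (h1 : C.P (i + 1) - C.P i = -(α • (C.P (i + (n : ℤ) + 1) - C.P (i + (n : ℤ)))))
    (h2 : C.P (i + (n : ℤ)) - C.P (i + (n : ℤ) - 1) = -(α • (C.P i - C.P (i - 1))))
    (Dm Dp : ℝ × ℝ)
    (hDmu : ∀ x : ℝ × ℝ, onDiag C.P n (i - 1) x ∧ onDiag C.P n i x → x = Dm)
    (hDpu : ∀ x : ℝ × ℝ, onDiag C.P n i x ∧ onDiag C.P n (i + 1) x → x = Dp) :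
    Dp = (1 / 2 : ℝ) • (C.P i + C.P (i + (n : ℤ)))
        + ((α - 1) / (2 * (1 + α))) • (C.P (i + (n : ℤ)) - C.P i) ∧
    Dm = (1 / 2 : ℝ) • (C.P i + C.P (i + (n : ℤ)))
        - ((α - 1) / (2 * (1 + α))) • (C.P (i + (n : ℤ)) - C.P i) ∧
    (1 / 2 : ℝ) • (C.P i + C.P (i + (n : ℤ))) = (1 / 2 : ℝ) • (Dm + Dp) := by
  have h1α : (1 : ℝ) + α ≠ 0 := by positivity
  have hα1 : α + (1 : ℝ) ≠ 0 := by positivity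
  have hp := add_smul_sub_eq_of_smul_sub_add_smul_sub_eq_zero h1α
    (A := C.P i) (B := C.P (i + n)) (Q := C.P (i + 1)) (R := C.P (i + 1 + n))
    (by rw [add_right_comm, one_smul, h1, neg_add_cancel])
  have hm := add_smul_sub_eq_of_smul_sub_add_smul_sub_eq_zero hα1
    (A := C.P i) (B := C.P (i + n)) (Q := C.P (i - 1)) (R := C.P (i - 1 + n))
    (by rw [show i - 1 + (n : ℤ) = i + n - 1 by ring, one_smul, ← neg_sub (C.P (i + n)), h2]
        module)
  have hDp := hDpu _ ⟨⟨_, rfl⟩, ⟨_, hp.symm⟩⟩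
  have hDm := hDmu _ ⟨⟨_, hm.symm⟩, ⟨_, rfl⟩⟩
  rw [add_smul_sub_eq_midpoint_add_smul_sub h1α] at hDp
  rw [add_smul_sub_eq_midpoint_add_smul_sub hα1] at hDm
  subst hDp hDm
  exact ⟨rfl, by module, by module⟩

/-- Let `P` be a CPOS polygon, `i` an index, and `α > 0`, `α ≠ 1`, with
`P_{i+1} - P_i = -α(P_{i+n+1} - P_{i+n})` and `P_{i+n} - P_{i+n-1} = -α(P_i - P_{i-1})`.
Let `M_i = (P_i + P_{i+n})/2`, and let `D(i-1/2)`, `D(i+1/2)` be the (unique) intersection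
points of `d_{i-1}, d_i` and of `d_i, d_{i+1}`. Then, with `λ = (α-1)/(2(1+α))`,
`D(i+1/2) = M_i + λ(P_{i+n} - P_i)` and `D(i-1/2) = M_i - λ(P_{i+n} - P_i)`;
in particular `M_i` is the midpoint of `D(i-1/2)D(i+1/2)`. -/
theorem statement7 {n : ℕ} (C : CPOS n) (i : ℤ) (α : ℝ) (hα : 0 < α) (hα1 : α ≠ 1)
    (h1 : C.P (i + 1) - C.P i = -(α • (C.P (i + (n : ℤ) + 1) - C.P (i + (n : ℤ)))))
    (h2 : C.P (i + (n : ℤ)) - C.P (i + (n : ℤ) - 1) = -(α • (C.P i - C.P (i - 1))))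
    (Dm Dp : ℝ × ℝ)
    (hDm : onDiag C.P n (i - 1) Dm ∧ onDiag C.P n i Dm)
    (hDmu : ∀ x : ℝ × ℝ, onDiag C.P n (i - 1) x ∧ onDiag C.P n i x → x = Dm)
    (hDp : onDiag C.P n i Dp ∧ onDiag C.P n (i + 1) Dp)
    (hDpu : ∀ x : ℝ × ℝ, onDiag C.P n i x ∧ onDiag C.P n (i + 1) x → x = Dp) :
    Dp = (1 / 2 : ℝ) • (C.P i + C.P (i + (n : ℤ)))
        + ((α - 1) / (2 * (1 + α))) • (C.P (i + (n : ℤ)) - C.P i) ∧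
    Dm = (1 / 2 : ℝ) • (C.P i + C.P (i + (n : ℤ)))
        - ((α - 1) / (2 * (1 + α))) • (C.P (i + (n : ℤ)) - C.P i) ∧
    (1 / 2 : ℝ) • (C.P i + C.P (i + (n : ℤ))) = (1 / 2 : ℝ) • (Dm + Dp) :=
  statement7_general C i α hα h1 h2 Dm Dp hDmu hDpu
end
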